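/- Let a < b, 0 < τ ≤ 1, and define N_{a,b,τ}(x) := σ(∑_{j=1}^d T_{τ,a,b}(x^{(j)}) - (d-1)) for x ∈ [0,1]^d. Then 0 ≤ N_{a,b,τ}(x) ≤ 1 for all x ∈ [0,1]^d; moreover N_{a,b,τ}(x) = 0 if x ∉ [a-τ, b+τ]^d and N_{a,b,τ}(x) = 1 if x ∈ [a,b]^d. -/

import Mathlib

/-- ReLU activation. -/
noncomputable def relu (t : ℝ) : ℝ := max t 0

/-- Trapezoid function built from ReLU. -/
noncomputable def trap (τ a b t : ℝ) : ℝ :=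
  (1 / τ) * (relu (t - a + τ) - relu (t - a) - relu (t - b) + relu (t - b - τ))

/-- The localized-approximation deep ReLU net `N_{a,b,τ}`. -/
noncomputable def netN (d : ℕ) (a b τ : ℝ) (x : Fin d → ℝ) : ℝ :=
  relu (∑ j : Fin d, trap τ a b (x j) - (d - 1))

lemma trap_nonneg {τ a b : ℝ} (hab : a < b) (hτ0 : 0 < τ) (t : ℝ) :
    0 ≤ trap τ a b t := by
  unfold trap relu
  have h1 : (0:ℝ) < 1/τ := by positivity
  apply mul_nonneg h1.le
  simp only [max_def]
  split_ifs <;> linarith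

lemma trap_le_one {τ a b : ℝ} (hab : a < b) (hτ0 : 0 < τ) (t : ℝ) :
    trap τ a b t ≤ 1 := by
  unfold trap relu
  rw [div_mul_eq_mul_div, div_le_one hτ0, one_mul]
  simp only [max_def]
  split_ifs <;> linarith

lemma trap_eq_one {τ a b t : ℝ} (hab : a < b) (hτ0 : 0 < τ)
    (h1 : a ≤ t) (h2 : t ≤ b) : trap τ a b t = 1 := by
  unfold trap relu
  rw [max_eq_left (by linarith), max_eq_left (by linarith),
    max_eq_right (by linarith), max_eq_right (by linarith)]
  field_simp
  ring

lemma trap_eq_zero {τ a b t : ℝ} (hab : a < b) (hτ0 : 0 < τ)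
    (h : t < a - τ ∨ b + τ < t) : trap τ a b t = 0 := by
  unfold trap relu
  rcases h with h|h
  · rw [max_eq_right (by linarith), max_eq_right (by linarith),
      max_eq_right (by linarith), max_eq_right (by linarith)]
    ring
  · rw [max_eq_left (by linarith), max_eq_left (by linarith),
      max_eq_left (by linarith), max_eq_left (by linarith)]
    ring

theorem stmt2 (d : ℕ) (a b τ : ℝ) (hab : a < b) (hτ0 : 0 < τ) (hτ1 : τ ≤ 1)
    (x : Fin d → ℝ) (hx : ∀ j, x j ∈ Set.Icc (0 : ℝ) 1) :
    (0 ≤ netN d a b τ x ∧ netN d a b τ x ≤ 1) ∧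
    (¬ (∀ j, x j ∈ Set.Icc (a - τ) (b + τ)) → netN d a b τ x = 0) ∧
    ((∀ j, x j ∈ Set.Icc a b) → netN d a b τ x = 1) := by
  have hle : ∀ t : ℝ, trap τ a b t ≤ 1 := trap_le_one hab hτ0
  have hnn : ∀ t : ℝ, 0 ≤ trap τ a b t := trap_nonneg hab hτ0
  refine ⟨⟨le_max_right _ _, ?_⟩, ?_, ?_⟩
  · have hsum : ∑ j : Fin d, trap τ a b (x j) ≤ d := by
      calc ∑ j : Fin d, trap τ a b (x j) ≤ ∑ _j : Fin d, (1:ℝ) :=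
            Finset.sum_le_sum fun j _ => hle (x j)
        _ = d := by simp
    unfold netN relu
    apply max_le (by linarith) (by norm_num)
  · intro hnot
    push_neg at hnot
    obtain ⟨j0, hj0⟩ := hnot
    have hz : trap τ a b (x j0) = 0 := by
      apply trap_eq_zero hab hτ0
      simp only [Set.mem_Icc, not_and_or, not_le] at hj0
      rcases hj0 with h|h
      · exact Or.inl h
      · exact Or.inr h
    have hsum : ∑ j : Fin d, trap τ a b (x j) ≤ (d:ℝ) - 1 := by
      have := Finset.sum_le_sum (s := Finset.univ.erase j0)
        (f := fun j => trap τ a b (x j)) (g := fun _ => (1:ℝ))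
        (fun j _ => hle (x j))
      have hcard : ((Finset.univ.erase j0).card : ℝ) = (d:ℝ) - 1 := by
        rw [Finset.card_erase_of_mem (Finset.mem_univ _)]
        simp
        have hd : 1 ≤ d := Fin.pos j0 |>.nat_succ_le
        push_cast [Nat.cast_sub hd]
        ring
      have hsplit : ∑ j : Fin d, trap τ a b (x j)
          = trap τ a b (x j0) + ∑ j ∈ Finset.univ.erase j0, trap τ a b (x j) :=
        (Finset.add_sum_erase _ _ (Finset.mem_univ j0)).symm
      rw [hsplit, hz, zero_add]
      calc ∑ j ∈ Finset.univ.erase j0, trap τ a b (x j)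
          ≤ ∑ _j ∈ Finset.univ.erase j0, (1:ℝ) := this
        _ = ((Finset.univ.erase j0).card : ℝ) := by simp
        _ = (d:ℝ) - 1 := hcard
    unfold netN relu
    rw [max_eq_right (by linarith)]
  · intro hall
    have : ∀ j : Fin d, trap τ a b (x j) = 1 := fun j =>
      trap_eq_one hab hτ0 (hall j).1 (hall j).2
    unfold netN relu
    rw [Finset.sum_congr rfl (fun j _ => this j)]
    simp
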